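/- Let N be a 4-dimensional nil power-associative evolution algebra over a field F of characteristic ≠ 2 which is indecomposable and not associative. Then N admits a natural basis (v_1, v_2, v_3, v_4) with v_1·v_1 = v_2 + v_3, v_2·v_2 = v_4, v_3·v_3 = −v_4, v_4·v_4 = 0 (the algebra N_{4,6}). -/

import Mathlib

/-!
Write `e i * e i = ∑ j, c i j • e j`. Nilness gives `c i i = 0`, and power-associativity
`a² a² = a⁴`, evaluated at `e p`, `e p ± e q` and `e p + e q ± e t` (characteristic `≠ 2`
separates even and odd parts), shows that all products `e i² * e j²` vanish, that
`c p q * c q p = 0`, and that the end `q` of a path `t → p → q` (`c t p * c p q ≠ 0`) is a sink: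
`e q² = 0`. Non-associativity produces such a path `u → v → w`. In dimension 4, `(e u²)² = 0`
then reads `c u v² • e v² + c u z² • e z² = 0` for the fourth index `z`, which fixes the
multiplication table to that of `N_{4,6}` up to rescaling the basis and one transvection.
-/

/-- Principal powers: `ppow m a k = a^(k+1)`. -/
def ppow {F A : Type*} [Field F] [AddCommGroup A] [Module F A]
    (m : A →ₗ[F] A →ₗ[F] A) (a : A) : ℕ → A
  | 0 => a
  | k + 1 => m (ppow m a k) a

namespace EvolutionAlgebra

open Module

variable {F A ι : Type*} [Field F] [AddCommGroup A] [Module F A]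

def IsNaturalBasis (m : A →ₗ[F] A →ₗ[F] A) (e : Basis ι F A) : Prop :=
  ∀ i j, i ≠ j → m (e i) (e j) = 0

def IsNil (m : A →ₗ[F] A →ₗ[F] A) : Prop :=
  ∀ a, ∃ k, ppow m a k = 0

def IsPowerAssoc (m : A →ₗ[F] A →ₗ[F] A) : Prop :=
  ∀ a i j, m (ppow m a i) (ppow m a j) = ppow m a (i + j + 1)

noncomputable def basisSq (m : A →ₗ[F] A →ₗ[F] A) (e : Basis ι F A) (i : ι) : A :=
  m (e i) (e i)

noncomputable def structConst (m : A →ₗ[F] A →ₗ[F] A) (e : Basis ι F A) (i j : ι) : F :=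
  e.repr (basisSq m e i) j

/-- The table of `N_{4,6}`, with the basis `v₁, …, v₄` of the paper indexed by `0, …, 3`. -/
def IsN46Basis (m : A →ₗ[F] A →ₗ[F] A) (v : Basis (Fin 4) F A) : Prop :=
  IsNaturalBasis m v ∧ m (v 0) (v 0) = v 1 + v 2 ∧ m (v 1) (v 1) = v 3 ∧
    m (v 2) (v 2) = -v 3 ∧ m (v 3) (v 3) = 0

variable {m : A →ₗ[F] A →ₗ[F] A} {e : Basis ι F A}

@[simp]
theorem repr_basisSq (i j : ι) : e.repr (basisSq m e i) j = structConst m e i j := rfl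

theorem IsNaturalBasis.reindex {ι' : Type*} (he : IsNaturalBasis m e) (σ : ι ≃ ι') :
    IsNaturalBasis m (e.reindex σ) := fun i j hij => by
  simpa using he _ _ (σ.symm.injective.ne hij)

theorem structConst_reindex {ι' : Type*} (σ : ι ≃ ι') (i j : ι') :
    structConst m (e.reindex σ) i j = structConst m e (σ.symm i) (σ.symm j) := by
  simp [structConst, basisSq]

namespace IsNaturalBasis

variable [Fintype ι] (he : IsNaturalBasis m e)
include he

theorem mul_basis (y : A) (j : ι) : m y (e j) = e.repr y j • basisSq m e j := by
  conv_lhs => rw [← e.sum_repr y]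
  rw [map_sum, LinearMap.sum_apply, Finset.sum_eq_single j (fun i _ hij => by
    rw [map_smul, LinearMap.smul_apply, he i j hij, smul_zero]) (by simp)]
  simp [basisSq]

theorem mul_eq_sum (a b : A) : m a b = ∑ k, (e.repr a k * e.repr b k) • basisSq m e k := by
  conv_lhs => rw [← e.sum_repr b]
  refine (map_sum _ _ _).trans (Finset.sum_congr rfl fun k _ => ?_)
  rw [map_smul, he.mul_basis, smul_smul, _root_.mul_comm]

theorem mul_comm (a b : A) : m a b = m b a := by
  rw [he.mul_eq_sum a, he.mul_eq_sum b]
  exact Finset.sum_congr rfl fun k _ => by rw [_root_.mul_comm]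

theorem mul_mul_eq_zero (h : ∀ u v w, structConst m e u v ≠ 0 → structConst m e v w = 0)
    (x y z : A) : m (m x y) z = 0 := by
  have hsink : ∀ k, m (basisSq m e k) z = 0 := fun k => by
    rw [he.mul_eq_sum]
    refine Finset.sum_eq_zero fun j _ => ?_
    by_cases hkj : structConst m e k j = 0
    · simp [hkj]
    · have : basisSq m e j = 0 := e.ext_elem fun l => by simp [h k j l hkj]
      simp [this]
  rw [he.mul_eq_sum x y]
  simp [map_sum, hsink]

theorem exists_structConst_ne_zero_of_not_assoc (hna : ¬ ∀ x y z, m (m x y) z = m x (m y z)) :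
    ∃ u v w, structConst m e u v ≠ 0 ∧ structConst m e v w ≠ 0 := by
  by_contra! h
  refine hna fun x y z => ?_
  rw [he.mul_mul_eq_zero h, he.mul_comm x, he.mul_mul_eq_zero h]

theorem ppow_basis_succ (i : ι) (n : ℕ) :
    ppow m (e i) (n + 1) = structConst m e i i ^ n • basisSq m e i := by
  induction n with
  | zero => simp [ppow, basisSq]
  | succ n ih => rw [ppow, ih, map_smul, LinearMap.smul_apply, he.mul_basis, smul_smul,
      repr_basisSq, pow_succ]

theorem structConst_self (hnil : IsNil m) (i : ι) : structConst m e i i = 0 := by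
  obtain ⟨_ | n, hn⟩ := hnil (e i)
  · exact absurd hn (e.ne_zero i)
  rw [he.ppow_basis_succ] at hn
  rcases smul_eq_zero.mp hn with h | h
  · exact IsNilpotent.eq_zero ⟨_, h⟩
  · simp [structConst, h]

variable (hnil : IsNil m) (hpa : IsPowerAssoc m)
include hnil hpa

theorem basisSq_mul_self (i : ι) : m (basisSq m e i) (basisSq m e i) = 0 := by
  simpa [he.ppow_basis_succ, he.structConst_self hnil] using hpa (e i) 1 1

/-- `a² a² = a⁴` at `a = e p + x • e q`. -/
theorem two_mul_sq_smul_basisSq_mul {p q : ι} (hpq : p ≠ q) (x : F) :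
    (2 * x ^ 2) • m (basisSq m e p) (basisSq m e q) =
      (x * (structConst m e p q * structConst m e q p)) • basisSq m e p +
        (x ^ 3 * (structConst m e p q * structConst m e q p)) • basisSq m e q := by
  have h := hpa (e p + x • e q) 1 1
  simp only [ppow, map_add, map_smul, LinearMap.add_apply, LinearMap.smul_apply, he.mul_basis,
    repr_basisSq, Basis.repr_self, Finsupp.single_eq_same, Finsupp.single_eq_of_ne hpq,
    Finsupp.single_eq_of_ne hpq.symm, he.structConst_self hnil, he.basisSq_mul_self hnil hpa,
    he.mul_comm (basisSq m e q)] at h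
  linear_combination (norm := module) h

variable (h2 : (2 : F) ≠ 0)
include h2

theorem basisSq_mul_basisSq (p q : ι) : m (basisSq m e p) (basisSq m e q) = 0 := by
  obtain rfl | hpq := eq_or_ne p q
  · exact he.basisSq_mul_self hnil hpa p
  have h := congr($(he.two_mul_sq_smul_basisSq_mul hnil hpa hpq 1) +
    $(he.two_mul_sq_smul_basisSq_mul hnil hpa hpq (-1)))
  have h4 : (4 : F) ≠ 0 := by simpa [show (4 : F) = 2 * 2 by norm_num] using h2
  have : (4 : F) • m (basisSq m e p) (basisSq m e q) = 0 := by
    linear_combination (norm := module) h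
  exact (smul_eq_zero.mp this).resolve_left h4

theorem ppow_three_eq_zero (a : A) : ppow m a 3 = 0 := by
  rw [← hpa a 1 1, ppow, ppow, he.mul_eq_sum a a]
  simp [map_sum, he.basisSq_mul_basisSq hnil hpa h2]

theorem structConst_mul_structConst_swap (p q : ι) :
    structConst m e p q * structConst m e q p = 0 := by
  obtain rfl | hpq := eq_or_ne p q
  · simp [he.structConst_self hnil]
  have h := congr(e.repr $(he.two_mul_sq_smul_basisSq_mul hnil hpa hpq 1) q)
  simp [he.basisSq_mul_basisSq hnil hpa h2, he.structConst_self hnil] at h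
  rcases h with (h | h) | h <;> simp [h]

theorem structConst_mul_structConst_smul_basisSq (t p q : ι) :
    (structConst m e t p * structConst m e p q) • basisSq m e q = 0 := by
  by_cases hpq : p = q
  · simp [hpq, he.structConst_self hnil]
  by_cases htp : t = p
  · simp [htp, he.structConst_self hnil]
  by_cases htq : t = q
  · simp [htq, he.structConst_mul_structConst_swap hnil hpa h2]
  by_cases hcpq : structConst m e p q = 0
  · simp [hcpq]
  have hcqp : structConst m e q p = 0 :=
    (mul_eq_zero.mp (he.structConst_mul_structConst_swap hnil hpa h2 p q)).resolve_left hcpq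
  -- `(e p + e q + x • e t)⁴ = 0`; adding the cases `x = 1` and `x = -1` kills the odd part.
  have key : ∀ x : F, ppow m (e p + e q + x • e t) 3 = 0 := fun x =>
    he.ppow_three_eq_zero hnil hpa h2 _
  have h := congr($(key 1) + $(key (-1)))
  simp only [ppow, map_add, map_smul, LinearMap.add_apply, LinearMap.smul_apply, he.mul_basis,
    repr_basisSq, Basis.repr_self, Finsupp.single_eq_same, Finsupp.single_eq_of_ne hpq,
    Finsupp.single_eq_of_ne (Ne.symm hpq), Finsupp.single_eq_of_ne htp,
    Finsupp.single_eq_of_ne (Ne.symm htp), Finsupp.single_eq_of_ne htq,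
    Finsupp.single_eq_of_ne (Ne.symm htq), he.structConst_self hnil, hcqp] at h
  have : (2 : F) • ((structConst m e t p * structConst m e p q) • basisSq m e q) = 0 := by
    linear_combination (norm := module) h
  exact (smul_eq_zero.mp this).resolve_left h2

end IsNaturalBasis

theorem IsNaturalBasis.exists_isN46Basis {b : Basis (Fin 4) F A} (hb : IsNaturalBasis m b)
    {α β γ δ : F} (hα : α ≠ 0) (hβ : β ≠ 0) (hδ : δ ≠ 0)
    (hsq0 : basisSq m b 0 = α • b 1 + β • b 2 + γ • b 3) (hsq1 : basisSq m b 1 = δ • b 3)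
    (hsq2 : β ^ 2 • basisSq m b 2 = -(α ^ 2 * δ) • b 3) (hsq3 : basisSq m b 3 = 0) :
    ∃ v : Basis (Fin 4) F A, IsN46Basis m v := by
  have hK : α ^ 2 * δ ≠ 0 := mul_ne_zero (pow_ne_zero 2 hα) hδ
  have hT : b.coord 1 ((γ / α) • b 3) = 0 := by simp
  have hw : ∀ i, IsUnit (![1, α, β, α ^ 2 * δ] i) := by
    intro i; fin_cases i <;> simp [hα, hβ, hK]
  let v := (b.map (LinearEquiv.transvection hT)).isUnitSMul hw
  have hv : ∀ i, v i = ![1, α, β, α ^ 2 * δ] i • (b i + b.repr (b i) 1 • (γ / α) • b 3) :=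
    fun i => by
      rw [Basis.isUnitSMul_apply, Basis.map_apply, LinearEquiv.transvection.apply,
        Basis.coord_apply]
  have hv0 : v 0 = b 0 := by simp [hv]
  have hv1 : v 1 = α • b 1 + γ • b 3 := by simp [hv, smul_smul, mul_div_cancel₀ _ hα]
  have hv2 : v 2 = β • b 2 := by simp [hv]
  have hv3 : v 3 = (α ^ 2 * δ) • b 3 := by simp [hv]
  have hb' : ∀ i j, i ≠ j → m (b i) (b j) = 0 := hb
  have hb3 : m (b 3) (b 3) = 0 := hsq3
  refine ⟨v, fun i j hij => ?_, ?_, ?_, ?_, ?_⟩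
  · fin_cases i <;> fin_cases j <;> simp_all
  · rw [hv0, hv1, hv2, ← basisSq, hsq0]
    module
  · rw [hv1, hv3]
    simp only [map_add, map_smul, LinearMap.add_apply, LinearMap.smul_apply, hb' 1 3 (by decide),
      hb' 3 1 (by decide), hb3, smul_zero, add_zero]
    rw [← basisSq, hsq1]
    module
  · rw [hv2, hv3]
    simp only [map_smul, LinearMap.smul_apply, smul_smul]
    rw [← basisSq, ← pow_two, hsq2, neg_smul]
  · simp [hv3, hb3]

section Fin4

variable {b : Basis (Fin 4) F A} (hb : IsNaturalBasis m b) (hnil : IsNil m)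
  (hpa : IsPowerAssoc m) (h2 : (2 : F) ≠ 0)
include hb hnil hpa h2

theorem IsNaturalBasis.exists_isN46Basis_of_structConst_ne_zero
    (h01 : structConst m b 0 1 ≠ 0) (h13 : structConst m b 1 3 ≠ 0) :
    ∃ v : Basis (Fin 4) F A, IsN46Basis m v := by
  have hself := hb.structConst_self hnil
  have hpath := hb.structConst_mul_structConst_smul_basisSq hnil hpa h2
  have hexp : ∀ i, basisSq m b i = structConst m b i 0 • b 0 + structConst m b i 1 • b 1 +
      structConst m b i 2 • b 2 + structConst m b i 3 • b 3 := fun i => by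
    simpa [Fin.sum_univ_four] using (b.sum_repr (basisSq m b i)).symm
  have h3 : basisSq m b 3 = 0 :=
    (smul_eq_zero.mp (hpath 0 1 3)).resolve_left (mul_ne_zero h01 h13)
  have hsq0 : structConst m b 0 1 ^ 2 • basisSq m b 1 +
      structConst m b 0 2 ^ 2 • basisSq m b 2 = 0 := by
    have := hb.basisSq_mul_self hnil hpa 0
    rw [hb.mul_eq_sum, Fin.sum_univ_four] at this
    simpa [hself, h3, pow_two] using this
  have hE1 : basisSq m b 1 ≠ 0 := fun h => h13 (by simp [structConst, h])
  have hsq2 : structConst m b 0 2 ^ 2 • basisSq m b 2 ≠ 0 := by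
    rw [eq_neg_of_add_eq_zero_right hsq0]
    exact neg_ne_zero.mpr (smul_ne_zero (pow_ne_zero 2 h01) hE1)
  obtain ⟨hc02, hE2⟩ := smul_ne_zero_iff.mp hsq2
  have h10 : structConst m b 1 0 = 0 :=
    (mul_eq_zero.mp (hb.structConst_mul_structConst_swap hnil hpa h2 0 1)).resolve_left h01
  have h12 : structConst m b 1 2 = 0 :=
    (mul_eq_zero.mp ((smul_eq_zero.mp (hpath 0 1 2)).resolve_right hE2)).resolve_left h01
  have h1 : basisSq m b 1 = structConst m b 1 3 • b 3 := by simp [hexp 1, h10, hself, h12]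
  refine hb.exists_isN46Basis (γ := structConst m b 0 3) h01
    (pow_ne_zero_iff two_ne_zero |>.mp hc02) h13 (by simp [hexp 0, hself]) h1 ?_ h3
  rw [h1] at hsq0
  linear_combination (norm := module) hsq0

end Fin4

theorem IsNaturalBasis.exists_perm_structConst_ne_zero {e : Basis (Fin 4) F A}
    (he : IsNaturalBasis m e) (hnil : IsNil m) (hpa : IsPowerAssoc m) (h2 : (2 : F) ≠ 0)
    {u v w : Fin 4} (huv : structConst m e u v ≠ 0) (hvw : structConst m e v w ≠ 0) :
    ∃ σ : Equiv.Perm (Fin 4),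
      structConst m (e.reindex σ) 0 1 ≠ 0 ∧ structConst m (e.reindex σ) 1 3 ≠ 0 := by
  have hself := he.structConst_self hnil
  have hne_uv : u ≠ v := by rintro rfl; exact huv (hself u)
  have hne_vw : v ≠ w := by rintro rfl; exact hvw (hself v)
  have hne_uw : u ≠ w := by
    rintro rfl; exact mul_ne_zero huv hvw (he.structConst_mul_structConst_swap hnil hpa h2 u v)
  have hperm : ∀ u v w : Fin 4, u ≠ v → v ≠ w → u ≠ w →
      ∃ σ : Equiv.Perm (Fin 4), σ 0 = u ∧ σ 1 = v ∧ σ 3 = w := by decide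
  obtain ⟨σ, rfl, rfl, rfl⟩ := hperm u v w hne_uv hne_vw hne_uw
  exact ⟨σ.symm, by simpa [structConst_reindex] using huv,
    by simpa [structConst_reindex] using hvw⟩

end EvolutionAlgebra

open EvolutionAlgebra in
theorem nil_pa_nonassoc_indecomposable_dim4_classification_general
    (F : Type*) [Field F] (h2 : (2 : F) ≠ 0)
    (A : Type*) [AddCommGroup A] [Module F A]
    (m : A →ₗ[F] A →ₗ[F] A)
    (e : Module.Basis (Fin 4) F A)
    (hnat : ∀ i j : Fin 4, i ≠ j → m (e i) (e j) = 0)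
    (hnil : ∀ a : A, ∃ k : ℕ, ppow m a k = 0)
    (hpa : ∀ (a : A) (i j : ℕ),
      m (ppow m a i) (ppow m a j) = ppow m a (i + j + 1))
    (hnotassoc : ¬ ∀ x y z : A, m (m x y) z = m x (m y z)) :
    ∃ v : Module.Basis (Fin 4) F A,
      (∀ i j : Fin 4, i ≠ j → m (v i) (v j) = 0) ∧
      m (v 0) (v 0) = v 1 + v 2 ∧
      m (v 1) (v 1) = v 3 ∧
      m (v 2) (v 2) = -v 3 ∧
      m (v 3) (v 3) = 0 := by
  have he : IsNaturalBasis m e := hnat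
  obtain ⟨u, v, w, huv, hvw⟩ := he.exists_structConst_ne_zero_of_not_assoc hnotassoc
  obtain ⟨σ, h01, h13⟩ := he.exists_perm_structConst_ne_zero hnil hpa h2 huv hvw
  exact (he.reindex σ).exists_isN46Basis_of_structConst_ne_zero hnil hpa h2 h01 h13

/-- a 4-dimensional nil power-associative evolution algebra over a field of
characteristic ≠ 2, indecomposable and not associative, is isomorphic to `N_{4,6}`:
`v₁² = v₂ + v₃`, `v₂² = v₄`, `v₃² = −v₄`, `v₄² = 0`. -/
theorem nil_pa_nonassoc_indecomposable_dim4_classification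
    (F : Type*) [Field F] (h2 : (2 : F) ≠ 0)
    (A : Type*) [AddCommGroup A] [Module F A]
    (m : A →ₗ[F] A →ₗ[F] A) (hcomm : ∀ x y : A, m x y = m y x)
    (e : Module.Basis (Fin 4) F A)
    (hnat : ∀ i j : Fin 4, i ≠ j → m (e i) (e j) = 0)
    (hnil : ∀ a : A, ∃ k : ℕ, ppow m a k = 0)
    (hpa : ∀ (a : A) (i j : ℕ),
      m (ppow m a i) (ppow m a j) = ppow m a (i + j + 1))
    (hnotassoc : ¬ ∀ x y z : A, m (m x y) z = m x (m y z))
    (hindec : ¬ ∃ I J : Submodule F A,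
      (∀ x ∈ I, ∀ y : A, m x y ∈ I) ∧ (∀ x ∈ J, ∀ y : A, m x y ∈ J) ∧
      I ≠ ⊥ ∧ J ≠ ⊥ ∧ IsCompl I J) :
    ∃ v : Module.Basis (Fin 4) F A,
      (∀ i j : Fin 4, i ≠ j → m (v i) (v j) = 0) ∧
      m (v 0) (v 0) = v 1 + v 2 ∧
      m (v 1) (v 1) = v 3 ∧
      m (v 2) (v 2) = -v 3 ∧
      m (v 3) (v 3) = 0 :=
  nil_pa_nonassoc_indecomposable_dim4_classification_general F h2 A m e hnat hnil hpa hnotassoc
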